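/- Let n ≥ 1, ω_0,...,ω_n > 0, and regard each h^n_i as a function of t on (0,1). Then for every i with 1 ≤ i ≤ n and every t ∈ (0,1), the second derivative satisfies (h^n_i)''(t) · (ω_{i-1}·i·(1-t) + ω_i·t·(n-i+1)·h^n_{i-1}(t)) = ω_i·(n-i+1)·[(1 - h^n_i(t))·(t·(h^n_{i-1})''(t) + 2·(h^n_{i-1})'(t)) - 2·(h^n_i)'(t)·(t·(h^n_{i-1})'(t) + h^n_{i-1}(t))] + 2·ω_{i-1}·i·(h^n_i)'(t), with (h^n_0)'' ≡ 0. -/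

import Mathlib

open Finset

/-- The `k`-th Bernstein polynomial of degree `n`. -/
noncomputable def bern (n k : ℕ) (t : ℝ) : ℝ :=
  (n.choose k : ℝ) * t ^ k * (1 - t) ^ (n - k)

/-- The quantity `h^n_i(t)`, with `h^n_0(t) := 1`. -/
noncomputable def hfun (n : ℕ) (ω : ℕ → ℝ) (i : ℕ) (t : ℝ) : ℝ :=
  if i = 0 then 1
  else ω i * bern n i t / ∑ k ∈ range (i + 1), ω k * bern n k t

lemma bern_contDiff (n k : ℕ) : ContDiff ℝ (⊤ : ℕ∞) (bern n k) := by
  unfold bern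
  exact (contDiff_const.mul ((contDiff_id (E := ℝ)).pow k)).mul
    ((contDiff_const.sub contDiff_id).pow (n - k))

lemma bern_pos {n k : ℕ} (hk : k ≤ n) {t : ℝ} (h0 : 0 < t) (h1 : t < 1) :
    0 < bern n k t := by
  unfold bern
  have h : (0:ℝ) < n.choose k := by exact_mod_cast Nat.choose_pos hk
  have h2 : (0:ℝ) < 1 - t := by linarith
  positivity

noncomputable def Pfun (n : ℕ) (ω : ℕ → ℝ) (k : ℕ) : ℝ → ℝ :=
  fun u => ω k * bern n k u

noncomputable def Sfun (n : ℕ) (ω : ℕ → ℝ) (j : ℕ) : ℝ → ℝ :=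
  fun u => ∑ k ∈ range (j + 1), Pfun n ω k u

lemma Pfun_contDiff (n : ℕ) (ω : ℕ → ℝ) (k : ℕ) : ContDiff ℝ (⊤ : ℕ∞) (Pfun n ω k) :=
  contDiff_const.mul (bern_contDiff n k)

lemma Sfun_contDiff (n : ℕ) (ω : ℕ → ℝ) (j : ℕ) : ContDiff ℝ (⊤ : ℕ∞) (Sfun n ω j) :=
  ContDiff.sum fun k _ => Pfun_contDiff n ω k

lemma div_deriv2 {f g : ℝ → ℝ} (hf : ContDiff ℝ (⊤ : ℕ∞) f) (hg : ContDiff ℝ (⊤ : ℕ∞) g)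
    {t : ℝ} {U : Set ℝ} (hUo : IsOpen U) (htU : t ∈ U) (hgU : ∀ u ∈ U, g u ≠ 0) :
    deriv (fun u => f u / g u) t = (deriv f t * g t - f t * deriv g t) / (g t) ^ 2 ∧
    deriv (deriv fun u => f u / g u) t =
      ((deriv (deriv f) t * g t - f t * deriv (deriv g) t) * g t
        - 2 * deriv g t * (deriv f t * g t - f t * deriv g t)) / (g t) ^ 3 := by
  have h1i : ((⊤ : ℕ∞) : WithTop ℕ∞) ≠ 0 := by simp
  have hfd : Differentiable ℝ f := hf.differentiable h1i
  have hgd : Differentiable ℝ g := hg.differentiable h1i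
  have hfd' : Differentiable ℝ (deriv f) :=
    ((contDiff_infty_iff_deriv.mp hf).2).differentiable h1i
  have hgd' : Differentiable ℝ (deriv g) :=
    ((contDiff_infty_iff_deriv.mp hg).2).differentiable h1i
  have hder : ∀ u ∈ U, deriv (fun v => f v / g v) u
      = (deriv f u * g u - f u * deriv g u) / (g u) ^ 2 := fun u hu =>
    deriv_div (hfd u) (hgd u) (hgU u hu)
  refine ⟨hder t htU, ?_⟩
  have hev : deriv (fun v => f v / g v)
      =ᶠ[nhds t] fun u => (deriv f u * g u - f u * deriv g u) / (g u) ^ 2 :=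
    Filter.eventuallyEq_of_mem (hUo.mem_nhds htU) hder
  rw [hev.deriv_eq]
  have hnum : DifferentiableAt ℝ (fun u => deriv f u * g u - f u * deriv g u) t :=
    (((hfd'.mul hgd).sub (hfd.mul hgd')) t)
  have hden : DifferentiableAt ℝ (fun u => (g u) ^ 2) t := ((hgd.pow 2) t)
  have hgne : (g t) ^ 2 ≠ 0 := pow_ne_zero _ (hgU t htU)
  rw [deriv_fun_div hnum hden hgne, deriv_fun_sub (f := fun u => deriv f u * g u) (g := fun u => f u * deriv g u)
      ((hfd'.mul hgd) t) ((hfd.mul hgd') t),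
    deriv_fun_mul (hfd' t) (hgd t), deriv_fun_mul (hfd t) (hgd' t)]
  have hp : deriv (fun u => (g u) ^ 2) t = 2 * g t * deriv g t := by
    rw [deriv_fun_pow (hgd t) 2]; ring
  rw [hp]
  have h3 : g t ≠ 0 := hgU t htU
  field_simp
  ring

lemma deriv2_one_sub_mul {f : ℝ → ℝ} (hf : ContDiff ℝ (⊤ : ℕ∞) f) (t : ℝ) :
    deriv (fun u => (1 - u) * f u) t = (1 - t) * deriv f t - f t ∧
    deriv (deriv fun u => (1 - u) * f u) t
      = (1 - t) * deriv (deriv f) t - 2 * deriv f t := by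
  have h1i : ((⊤ : ℕ∞) : WithTop ℕ∞) ≠ 0 := by simp
  have hfd : Differentiable ℝ f := hf.differentiable h1i
  have hfd' : Differentiable ℝ (deriv f) :=
    ((contDiff_infty_iff_deriv.mp hf).2).differentiable h1i
  have hlin : Differentiable ℝ (fun u : ℝ => 1 - u) :=
    (differentiable_const 1).sub differentiable_id
  have hdlin : ∀ u : ℝ, deriv (fun v : ℝ => 1 - v) u = -1 := by
    intro u
    rw [deriv_fun_sub (differentiableAt_const 1) differentiableAt_fun_id, deriv_const, deriv_id'']
    ring
  have h1 : ∀ u : ℝ, deriv (fun v => (1 - v) * f v) u = (1 - u) * deriv f u - f u := by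
    intro u
    rw [deriv_fun_mul (hlin u) (hfd u), hdlin u]; ring
  refine ⟨h1 t, ?_⟩
  rw [funext h1, deriv_fun_sub (f := fun u => (1 - u) * deriv f u) (((hlin).mul hfd') t) (hfd t),
    deriv_fun_mul (hlin t) (hfd' t), hdlin t]
  ring

lemma deriv2_id_mul {f : ℝ → ℝ} (hf : ContDiff ℝ (⊤ : ℕ∞) f) (t : ℝ) :
    deriv (fun u => u * f u) t = t * deriv f t + f t ∧
    deriv (deriv fun u => u * f u) t
      = t * deriv (deriv f) t + 2 * deriv f t := by
  have h1i : ((⊤ : ℕ∞) : WithTop ℕ∞) ≠ 0 := by simp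
  have hfd : Differentiable ℝ f := hf.differentiable h1i
  have hfd' : Differentiable ℝ (deriv f) :=
    ((contDiff_infty_iff_deriv.mp hf).2).differentiable h1i
  have h1 : ∀ u : ℝ, deriv (fun v => v * f v) u = u * deriv f u + f u := by
    intro u
    rw [deriv_fun_mul differentiableAt_fun_id (hfd u), deriv_id'']; ring
  refine ⟨h1 t, ?_⟩
  have hd1 : DifferentiableAt ℝ (fun u : ℝ => u * deriv f u) t :=
    differentiableAt_fun_id.mul (hfd' t)
  rw [funext h1, deriv_fun_add hd1 (hfd t), deriv_fun_mul differentiableAt_fun_id (hfd' t), deriv_id'']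
  ring

set_option maxHeartbeats 3200000 in
/-- differential-recurrence relation for the second derivative of `h^n_i`,
with `(h^n_0)'' ≡ 0`. -/
theorem hfun_second_deriv_recurrence (n : ℕ) (hn : 1 ≤ n) (ω : ℕ → ℝ)
    (hω : ∀ k ≤ n, 0 < ω k) :
    (∀ s : ℝ, iteratedDeriv 2 (hfun n ω 0) s = 0)
    ∧ ∀ i, 1 ≤ i → i ≤ n → ∀ t : ℝ, 0 < t → t < 1 →
        iteratedDeriv 2 (hfun n ω i) t *
            (ω (i - 1) * i * (1 - t) + ω i * t * ((n : ℝ) - i + 1) * hfun n ω (i - 1) t) =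
          ω i * ((n : ℝ) - i + 1) *
              ((1 - hfun n ω i t) *
                  (t * iteratedDeriv 2 (hfun n ω (i - 1)) t + 2 * deriv (hfun n ω (i - 1)) t)
                - 2 * deriv (hfun n ω i) t *
                    (t * deriv (hfun n ω (i - 1)) t + hfun n ω (i - 1) t))
            + 2 * ω (i - 1) * i * deriv (hfun n ω i) t := by
  constructor
  · intro s
    have h0 : hfun n ω 0 = fun _ => (1:ℝ) := by funext u; simp [hfun]
    simp [h0, iteratedDeriv_succ, iteratedDeriv_zero]
  intro i hi1 hin t ht0 ht1
  obtain ⟨j, rfl⟩ : ∃ j, i = j + 1 := ⟨i - 1, (Nat.succ_pred_eq_of_pos hi1).symm⟩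
  simp only [Nat.add_sub_cancel]
  have htI : t ∈ Set.Ioo (0:ℝ) 1 := ⟨ht0, ht1⟩
  have hjn : j ≤ n := le_trans (Nat.le_succ j) hin
  -- positivity of the partial sums on (0,1)
  have hSpos : ∀ j ≤ n, ∀ u ∈ Set.Ioo (0:ℝ) 1, 0 < Sfun n ω j u := by
    intro j hj u hu
    refine Finset.sum_pos (fun k hk => ?_) ⟨0, by simp⟩
    have hkn : k ≤ n := le_trans (Nat.lt_succ_iff.mp (mem_range.mp hk)) hj
    exact mul_pos (hω k hkn) (bern_pos hkn hu.1 hu.2)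
  -- hfun agrees with Pfun/Sfun on (0,1)
  have hfeq : ∀ j ≤ n, ∀ u ∈ Set.Ioo (0:ℝ) 1, hfun n ω j u = Pfun n ω j u / Sfun n ω j u := by
    intro j hj u hu
    rcases Nat.eq_zero_or_pos j with rfl | hjpos
    · have hS0 : Sfun n ω 0 u = Pfun n ω 0 u := by simp [Sfun]
      have hne : Pfun n ω 0 u ≠ 0 :=
        ne_of_gt (mul_pos (hω 0 (Nat.zero_le n)) (bern_pos (Nat.zero_le n) hu.1 hu.2))
      rw [hS0, div_self hne]
      simp [hfun]
    · rw [hfun, if_neg (Nat.pos_iff_ne_zero.mp hjpos)]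
      rfl
  have hmem : Set.Ioo (0:ℝ) 1 ∈ nhds t := isOpen_Ioo.mem_nhds htI
  have hev : ∀ j ≤ n, hfun n ω j =ᶠ[nhds t] fun u => Pfun n ω j u / Sfun n ω j u :=
    fun j hj => Filter.eventuallyEq_of_mem hmem (fun u hu => hfeq j hj u hu)
  have h1i : ((⊤ : ℕ∞) : WithTop ℕ∞) ≠ 0 := by simp
  -- differentiability facts
  have hPdifH : Differentiable ℝ (Pfun n ω (j+1)) := (Pfun_contDiff n ω (j+1)).differentiable h1i
  have hPdifG : Differentiable ℝ (Pfun n ω j) := (Pfun_contDiff n ω j).differentiable h1i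
  have hSdifH : Differentiable ℝ (Sfun n ω (j+1)) := (Sfun_contDiff n ω (j+1)).differentiable h1i
  have hSdifG : Differentiable ℝ (Sfun n ω j) := (Sfun_contDiff n ω j).differentiable h1i
  have hPdifH' : Differentiable ℝ (deriv (Pfun n ω (j+1))) :=
    ((contDiff_infty_iff_deriv.mp (Pfun_contDiff n ω (j+1))).2).differentiable h1i
  have hPdifG' : Differentiable ℝ (deriv (Pfun n ω j)) :=
    ((contDiff_infty_iff_deriv.mp (Pfun_contDiff n ω j)).2).differentiable h1i
  have hSdifH' : Differentiable ℝ (deriv (Sfun n ω (j+1))) :=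
    ((contDiff_infty_iff_deriv.mp (Sfun_contDiff n ω (j+1))).2).differentiable h1i
  have hSdifG' : Differentiable ℝ (deriv (Sfun n ω j)) :=
    ((contDiff_infty_iff_deriv.mp (Sfun_contDiff n ω j)).2).differentiable h1i
  -- value and first derivative of hfun on (0,1)
  have key : ∀ j' ≤ n, ∀ u ∈ Set.Ioo (0:ℝ) 1,
      hfun n ω j' u = Pfun n ω j' u / Sfun n ω j' u ∧
      deriv (hfun n ω j') u
        = (deriv (Pfun n ω j') u * Sfun n ω j' u - Pfun n ω j' u * deriv (Sfun n ω j') u)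
            / (Sfun n ω j' u) ^ 2 := by
    intro j' hj' u hu
    have hevu : hfun n ω j' =ᶠ[nhds u] fun v => Pfun n ω j' v / Sfun n ω j' v :=
      Filter.eventuallyEq_of_mem (isOpen_Ioo.mem_nhds hu) (fun v hv => hfeq j' hj' v hv)
    refine ⟨hfeq j' hj' u hu, ?_⟩
    rw [hevu.deriv_eq]
    exact deriv_div ((Pfun_contDiff n ω j').differentiable h1i u)
      ((Sfun_contDiff n ω j').differentiable h1i u) (ne_of_gt (hSpos j' hj' u hu))
  -- the algebraic Bernstein relation and its derivative
  have hchoose : ((j:ℝ) + 1) * (n.choose (j+1)) = ((n:ℝ) - (j+1) + 1) * (n.choose j) := by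
    have h := Nat.choose_succ_right_eq n j
    have h2 := congrArg (fun m : ℕ => (m : ℝ)) h
    push_cast at h2
    rw [Nat.cast_sub hjn] at h2
    push_cast
    linear_combination h2
  set A := ω j * ((j+1:ℕ):ℝ) with hAdef
  set C := ω (j+1) * ((n:ℝ) - ((j+1:ℕ):ℝ) + 1) with hCdef
  have hF : ∀ u : ℝ, A * ((1-u) * Pfun n ω (j+1) u) = C * (u * Pfun n ω j u) := by
    intro u
    rw [hAdef, hCdef]
    show (ω j * ((j+1:ℕ):ℝ)) * ((1-u) * (ω (j+1) * bern n (j+1) u))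
        = (ω (j+1) * ((n:ℝ) - ((j+1:ℕ):ℝ) + 1)) * (u * (ω j * bern n j u))
    unfold bern
    have e : n - j = (n - (j+1)) + 1 := by omega
    rw [e, pow_succ (1-u) (n - (j+1)), pow_succ u j]
    push_cast
    linear_combination (ω j * ω (j + 1) * u ^ j * u * (1 - u) ^ (n - (j + 1)) * (1 - u)) * hchoose
  have hFfun : (fun u => A * ((1-u) * Pfun n ω (j+1) u))
      = fun u => C * (u * Pfun n ω j u) := funext hF
  have e1 : deriv (fun u => A * ((1-u) * Pfun n ω (j+1) u))
      = fun u => A * deriv (fun v => (1-v) * Pfun n ω (j+1) v) u :=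
    funext fun u => deriv_const_mul_field _
  have e2 : deriv (fun u => C * (u * Pfun n ω j u))
      = fun u => C * deriv (fun v => v * Pfun n ω j v) u :=
    funext fun u => deriv_const_mul_field _
  have hR2fun : (fun u => A * deriv (fun v => (1-v) * Pfun n ω (j+1) v) u)
      = fun u => C * deriv (fun v => v * Pfun n ω j v) u := by
    rw [← e1, ← e2, hFfun]
  have R2 : ∀ u : ℝ, A * ((1-u) * deriv (Pfun n ω (j+1)) u - Pfun n ω (j+1) u)
      = C * (u * deriv (Pfun n ω j) u + Pfun n ω j u) := by
    intro u
    have h := congrFun hR2fun u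
    rw [(deriv2_one_sub_mul (Pfun_contDiff n ω (j+1)) u).1,
      (deriv2_id_mul (Pfun_contDiff n ω j) u).1] at h
    linear_combination h
  -- sum decomposition
  have hSfeq : ∀ u, Sfun n ω (j+1) u = Sfun n ω j u + Pfun n ω (j+1) u := by
    intro u
    unfold Sfun
    rw [sum_range_succ]
  have hSd : ∀ u, deriv (Sfun n ω (j+1)) u = deriv (Sfun n ω j) u + deriv (Pfun n ω (j+1)) u := by
    intro u
    rw [funext hSfeq, deriv_fun_add (hSdifG u) (hPdifH u)]
  -- nonvanishing constants
  have hCpos : 0 < C := by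
    rw [hCdef]
    have hle : ((j+1:ℕ):ℝ) ≤ (n:ℝ) := Nat.cast_le.mpr hin
    have h2 : (0:ℝ) < (n:ℝ) - ((j+1:ℕ):ℝ) + 1 := by linarith
    exact mul_pos (hω (j+1) hin) h2
  have hCne : C ≠ 0 := ne_of_gt hCpos
  -- the first-order identity on (0,1)
  have star : ∀ u ∈ Set.Ioo (0:ℝ) 1,
      deriv (hfun n ω (j+1)) u * (A * (1-u) + C * (u * hfun n ω j u))
        = C * ((1 - hfun n ω (j+1) u) * (u * deriv (hfun n ω j) u + hfun n ω j u))
          + A * hfun n ω (j+1) u := by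
    intro u hu
    obtain ⟨hv1, hd1⟩ := key (j+1) hin u hu
    obtain ⟨hv0, hd0⟩ := key j hjn u hu
    rw [hv1, hd1, hv0, hd0, hSd u, hSfeq u]
    have hrne : Sfun n ω j u ≠ 0 := ne_of_gt (hSpos j hjn u hu)
    have hsne : Sfun n ω j u + Pfun n ω (j+1) u ≠ 0 := by
      rw [← hSfeq u]; exact ne_of_gt (hSpos (j+1) hin u hu)
    have hune : u ≠ 0 := ne_of_gt hu.1
    have squ : Pfun n ω j u = A * ((1-u) * Pfun n ω (j+1) u) / (C * u) := by
      rw [eq_div_iff (mul_ne_zero hCne hune)]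
      linear_combination -hF u
    have squ1 : deriv (Pfun n ω j) u
        = (A * ((1-u) * deriv (Pfun n ω (j+1)) u - Pfun n ω (j+1) u) - C * Pfun n ω j u)
            / (C * u) := by
      rw [eq_div_iff (mul_ne_zero hCne hune)]
      linear_combination -R2 u
    rw [squ1, squ]
    field_simp
    ring
  -- differentiate the first-order identity at t
  have hsne_t : Sfun n ω (j+1) t ≠ 0 := ne_of_gt (hSpos (j+1) hin t htI)
  have hrne_t : Sfun n ω j t ≠ 0 := ne_of_gt (hSpos j hjn t htI)
  have dH : DifferentiableAt ℝ (hfun n ω (j+1)) t :=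
    (hev (j+1) hin).differentiableAt_iff.mpr ((hPdifH t).div (hSdifH t) hsne_t)
  have dG : DifferentiableAt ℝ (hfun n ω j) t :=
    (hev j hjn).differentiableAt_iff.mpr ((hPdifG t).div (hSdifG t) hrne_t)
  have hevH' : deriv (hfun n ω (j+1)) =ᶠ[nhds t] fun v =>
      (deriv (Pfun n ω (j+1)) v * Sfun n ω (j+1) v
        - Pfun n ω (j+1) v * deriv (Sfun n ω (j+1)) v) / (Sfun n ω (j+1) v) ^ 2 :=
    Filter.eventuallyEq_of_mem hmem fun v hv => (key (j+1) hin v hv).2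
  have hevG' : deriv (hfun n ω j) =ᶠ[nhds t] fun v =>
      (deriv (Pfun n ω j) v * Sfun n ω j v
        - Pfun n ω j v * deriv (Sfun n ω j) v) / (Sfun n ω j v) ^ 2 :=
    Filter.eventuallyEq_of_mem hmem fun v hv => (key j hjn v hv).2
  have dH' : DifferentiableAt ℝ (deriv (hfun n ω (j+1))) t :=
    hevH'.differentiableAt_iff.mpr
      ((((hPdifH' t).mul (hSdifH t)).sub ((hPdifH t).mul (hSdifH' t))).div
        ((hSdifH t).pow 2) (pow_ne_zero 2 hsne_t))
  have dG' : DifferentiableAt ℝ (deriv (hfun n ω j)) t :=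
    hevG'.differentiableAt_iff.mpr
      ((((hPdifG' t).mul (hSdifG t)).sub ((hPdifG t).mul (hSdifG' t))).div
        ((hSdifG t).pow 2) (pow_ne_zero 2 hrne_t))
  have hGt := dG.hasDerivAt
  have hHt := dH.hasDerivAt
  have hG't := dG'.hasDerivAt
  have hH't := dH'.hasDerivAt
  have hlin : HasDerivAt (fun u : ℝ => A * (1 - u) + C * (u * hfun n ω j u))
      (A * (0 - 1) + C * (1 * hfun n ω j t + t * deriv (hfun n ω j) t)) t :=
    (((hasDerivAt_const t (1:ℝ)).sub (hasDerivAt_id t)).const_mul A).add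
      (((hasDerivAt_id t).mul hGt).const_mul C)
  have hLHS : HasDerivAt
      (fun u => deriv (hfun n ω (j+1)) u * (A * (1-u) + C * (u * hfun n ω j u)))
      (deriv (deriv (hfun n ω (j+1))) t * (A * (1-t) + C * (t * hfun n ω j t))
        + deriv (hfun n ω (j+1)) t
          * (A * (0 - 1) + C * (1 * hfun n ω j t + t * deriv (hfun n ω j) t))) t :=
    hH't.mul hlin
  have hinner : HasDerivAt (fun u : ℝ => u * deriv (hfun n ω j) u + hfun n ω j u)
      ((1 * deriv (hfun n ω j) t + t * deriv (deriv (hfun n ω j)) t)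
        + deriv (hfun n ω j) t) t :=
    ((hasDerivAt_id t).mul hG't).add hGt
  have hRHS : HasDerivAt
      (fun u => C * ((1 - hfun n ω (j+1) u) * (u * deriv (hfun n ω j) u + hfun n ω j u))
        + A * hfun n ω (j+1) u)
      (C * ((-(deriv (hfun n ω (j+1)) t)) * (t * deriv (hfun n ω j) t + hfun n ω j t)
          + (1 - hfun n ω (j+1) t)
            * ((1 * deriv (hfun n ω j) t + t * deriv (deriv (hfun n ω j)) t)
              + deriv (hfun n ω j) t))
        + A * deriv (hfun n ω (j+1)) t) t :=
    (((hHt.const_sub 1).mul hinner).const_mul C).add (hHt.const_mul A)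
  have hstarev : (fun u => deriv (hfun n ω (j+1)) u * (A * (1-u) + C * (u * hfun n ω j u)))
      =ᶠ[nhds t] fun u =>
        C * ((1 - hfun n ω (j+1) u) * (u * deriv (hfun n ω j) u + hfun n ω j u))
          + A * hfun n ω (j+1) u :=
    Filter.eventuallyEq_of_mem hmem fun u hu => star u hu
  have hkey : deriv (deriv (hfun n ω (j+1))) t * (A * (1-t) + C * (t * hfun n ω j t))
        + deriv (hfun n ω (j+1)) t
          * (A * (0 - 1) + C * (1 * hfun n ω j t + t * deriv (hfun n ω j) t))
      = C * ((-(deriv (hfun n ω (j+1)) t)) * (t * deriv (hfun n ω j) t + hfun n ω j t)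
          + (1 - hfun n ω (j+1) t)
            * ((1 * deriv (hfun n ω j) t + t * deriv (deriv (hfun n ω j)) t)
              + deriv (hfun n ω j) t))
        + A * deriv (hfun n ω (j+1)) t := by
    rw [← hLHS.deriv, hstarev.deriv_eq, hRHS.deriv]
  have hit1 : iteratedDeriv 2 (hfun n ω (j+1)) t = deriv (deriv (hfun n ω (j+1))) t := by
    rw [show (2:ℕ) = 1 + 1 from rfl, iteratedDeriv_succ, iteratedDeriv_one]
  have hit0 : iteratedDeriv 2 (hfun n ω j) t = deriv (deriv (hfun n ω j)) t := by
    rw [show (2:ℕ) = 1 + 1 from rfl, iteratedDeriv_succ, iteratedDeriv_one]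
  rw [hit1, hit0]
  have hCt : ω (j+1) * t * ((n:ℝ) - ((j+1:ℕ):ℝ) + 1) = C * t := by rw [hCdef]; ring
  rw [hCt]
  linear_combination hkey
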